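/- Let F_1 ∈ ℂ^{n×n} be the top-left n×n block of a unitary U ∈ U(r) (n ≤ r). Then the time-energy cost max_k |arg λ_k(U)| is at least arccos(σ_min(F_1)), the arccosine of the smallest singular value of F_1. -/

import Mathlib

/-!
Write `F₁ = Pᴴ U P` with `P` the isometric inclusion of the first `n` coordinates. A unit
eigenvector `w` of `F₁ᴴ F₁` for its least eigenvalue has `‖F₁ w‖ = σ_min(F₁)`, so by
Cauchy–Schwarz `Re ⟪P w, U P w⟫ = Re ⟪w, F₁ w⟫ ≤ σ_min(F₁)`. For a normal operator `T`,
`Re ⟪x, T x⟫ ≥ min {Re μ | μ ∈ σ(T)} ‖x‖²`, because `σ(ℜ T) = Re σ(T)`. Hence some eigenvalue `μ`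
of `U` has `Re μ ≤ σ_min(F₁)`, and as `|μ| = 1` this reads `|arg μ| = arccos (Re μ) ≥ arccos σ_min`.
-/

open Matrix
open scoped InnerProductSpace ComplexStarModule

lemma Complex.abs_arg_eq_arccos_re_div_norm {z : ℂ} (hz : z ≠ 0) :
    |arg z| = Real.arccos (z.re / ‖z‖) := by
  rw [← cos_arg hz, ← Real.cos_abs, Real.arccos_cos (abs_nonneg _) (abs_arg_le_pi z)]

section NormalOperator

variable {E : Type*} [NormedAddCommGroup E] [InnerProductSpace ℂ E] [CompleteSpace E]

open ContinuousLinearMap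

lemma ContinuousLinearMap.re_inner_realPart_apply (T : E →L[ℂ] E) (x : E) :
    (⟪x, (ℜ T : E →L[ℂ] E) x⟫_ℂ).re = (⟪x, T x⟫_ℂ).re := by
  have hsymm := inner_re_symm (𝕜 := ℂ) (T x) x
  simp only [RCLike.re_to_complex] at hsymm
  simp [realPart_apply_coe, star_eq_adjoint, adjoint_inner_right, hsymm]
  ring

theorem IsStarNormal.exists_mem_spectrum_re_mul_norm_sq_le [Nontrivial E] (T : E →L[ℂ] E)
    [IsStarNormal T] (x : E) :
    ∃ μ ∈ spectrum ℂ T, μ.re * ‖x‖ ^ 2 ≤ (⟪x, T x⟫_ℂ).re := by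
  obtain ⟨μ, hμ, hmin⟩ := (spectrum.isCompact T).exists_isMinOn (spectrum.nonempty T)
    Complex.continuous_re.continuousOn
  refine ⟨μ, hμ, ?_⟩
  have hle : algebraMap ℝ (E →L[ℂ] E) μ.re ≤ ℜ T := by
    refine algebraMap_le_of_le_spectrum fun y hy => ?_
    rw [spectrum_realPart' T] at hy
    obtain ⟨ν, hν, rfl⟩ := hy
    exact hmin hν
  have hpos : 0 ≤ (⟪x, (ℜ T : E →L[ℂ] E) x⟫_ℂ).re - μ.re * ‖x‖ ^ 2 := by
    simpa [inner_sub_right, Algebra.algebraMap_eq_smul_one, inner_smul_right_eq_smul,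
      inner_self_eq_norm_sq_to_K, ← Complex.ofReal_pow] using
      ((le_def _ _).mp hle).re_inner_nonneg_right x
  rw [re_inner_realPart_apply] at hpos
  linarith

end NormalOperator

section Matrix

lemma Matrix.submatrix_eq_conjTranspose_mul_mul {m n α : Type*} [Fintype n] [DecidableEq n]
    [Semiring α] [StarRing α] (A : Matrix n n α) (e : m → n) :
    A.submatrix e e =
      ((1 : Matrix n n α).submatrix id e)ᴴ * A * (1 : Matrix n n α).submatrix id e := by
  ext i j
  simp [mul_apply, one_apply]

variable {m n : Type*} [Fintype m] [DecidableEq m] [Fintype n] [DecidableEq n]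

theorem Matrix.exists_mem_spectrum_re_mul_norm_sq_le [Nonempty n] (U : Matrix n n ℂ)
    [IsStarNormal U] (x : EuclideanSpace ℂ n) :
    ∃ μ ∈ spectrum ℂ U, μ.re * ‖x‖ ^ 2 ≤ (⟪x, toEuclideanLin U x⟫_ℂ).re := by
  have := IsStarNormal.map (toEuclideanCLM (𝕜 := ℂ)) U
  obtain ⟨μ, hμ, hle⟩ :=
    IsStarNormal.exists_mem_spectrum_re_mul_norm_sq_le (toEuclideanCLM (𝕜 := ℂ) U) x
  exact ⟨μ, AlgEquiv.spectrum_eq (toEuclideanCLM (𝕜 := ℂ) (n := n)) U ▸ hμ, hle⟩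

lemma Matrix.inner_toEuclideanLin_submatrix_one (A : Matrix n n ℂ) (e : m → n)
    (w : EuclideanSpace ℂ m) :
    ⟪toEuclideanLin ((1 : Matrix n n ℂ).submatrix id e) w,
        toEuclideanLin A (toEuclideanLin ((1 : Matrix n n ℂ).submatrix id e) w)⟫_ℂ =
      ⟪w, toEuclideanLin (A.submatrix e e) w⟫_ℂ := by
  rw [submatrix_eq_conjTranspose_mul_mul, toLpLin_mul 2 2 2, toLpLin_mul 2 2 2,
    toEuclideanLin_conjTranspose_eq_adjoint]
  simp [LinearMap.adjoint_inner_right]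

lemma Matrix.norm_toEuclideanLin_submatrix_one {e : m → n} (he : Function.Injective e)
    (w : EuclideanSpace ℂ m) :
    ‖toEuclideanLin ((1 : Matrix n n ℂ).submatrix id e) w‖ = ‖w‖ := by
  have h := inner_toEuclideanLin_submatrix_one 1 e w
  rw [submatrix_one e he] at h
  simp only [toLpLin_one, LinearMap.id_apply, inner_self_eq_norm_sq_to_K] at h
  exact (sq_eq_sq₀ (norm_nonneg _) (norm_nonneg _)).mp (by exact_mod_cast h)

lemma Matrix.IsHermitian.toEuclideanLin_eigenvectorBasis {A : Matrix n n ℂ} (hA : A.IsHermitian)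
    (i : n) :
    toEuclideanLin A (hA.eigenvectorBasis i) = (hA.eigenvalues i : ℂ) • hA.eigenvectorBasis i := by
  ext j
  simpa [toLpLin_apply] using congrFun (hA.mulVec_eigenvectorBasis i) j

open scoped Matrix.Norms.L2Operator in
lemma Matrix.norm_eq_one_of_mem_spectrum {U : Matrix n n ℂ} (hU : U ∈ unitaryGroup n ℂ) {μ : ℂ}
    (hμ : μ ∈ spectrum ℂ U) : ‖μ‖ = 1 :=
  spectrum.norm_eq_one_of_unitary hU hμ

noncomputable def Matrix.minSingularValue (F : Matrix n n ℂ) : ℝ :=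
  √(⨅ i, (isHermitian_conjTranspose_mul_self F).eigenvalues i)

lemma Matrix.exists_norm_eq_one_and_norm_toEuclideanLin_eq_minSingularValue [Nonempty n]
    (F : Matrix n n ℂ) :
    ∃ w : EuclideanSpace ℂ n, ‖w‖ = 1 ∧ ‖toEuclideanLin F w‖ = F.minSingularValue := by
  set hG := isHermitian_conjTranspose_mul_self F
  obtain ⟨i, hi⟩ := exists_eq_ciInf_of_finite (f := hG.eigenvalues)
  set w := hG.eigenvectorBasis i
  have hw : ‖w‖ = 1 := hG.eigenvectorBasis.orthonormal.1 i
  refine ⟨w, hw, ?_⟩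
  have hsq : ‖toEuclideanLin F w‖ ^ 2 = hG.eigenvalues i := by
    rw [@norm_sq_eq_re_inner ℂ, ← LinearMap.adjoint_inner_right,
      ← toEuclideanLin_conjTranspose_eq_adjoint, ← LinearMap.comp_apply, ← toLpLin_mul 2 2 2,
      hG.toEuclideanLin_eigenvectorBasis, inner_smul_right, inner_self_eq_norm_sq_to_K, hw]
    simp
  rw [minSingularValue, ← hi, ← hsq, Real.sqrt_sq (norm_nonneg _)]

end Matrix

/-- If `F₁` is the top-left `n × n` block of a unitary `U ∈ U(r)`, then some
eigenvalue `μ` of `U` satisfies `|arg μ| ≥ arccos (σ_min F₁)`; i.e. the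
time-energy cost of `U` is at least `arccos` of the smallest singular value
of `F₁`. -/
theorem cost_ge_arccos_sigmaMin {n r : ℕ} (hn : 0 < n) (h : n ≤ r)
    (U : Matrix (Fin r) (Fin r) ℂ) (hU : U ∈ Matrix.unitaryGroup (Fin r) ℂ)
    (F₁ : Matrix (Fin n) (Fin n) ℂ)
    (hF₁ : F₁ = Matrix.of fun i j : Fin n => U (Fin.castLE h i) (Fin.castLE h j)) :
    ∃ μ ∈ spectrum ℂ U,
      Real.arccos
          (Real.sqrt (⨅ i, (Matrix.isHermitian_conjTranspose_mul_self F₁).eigenvalues i)) ≤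
        |Complex.arg μ| := by
  have : Nonempty (Fin n) := Fin.pos_iff_nonempty.mp hn
  have : Nonempty (Fin r) := ⟨Fin.castLE h ⟨0, hn⟩⟩
  have : IsStarNormal U := isStarNormal_of_mem_unitary hU
  obtain ⟨w, hw, hFw⟩ := F₁.exists_norm_eq_one_and_norm_toEuclideanLin_eq_minSingularValue
  set v := toEuclideanLin ((1 : Matrix (Fin r) (Fin r) ℂ).submatrix id (Fin.castLE h)) w
  have hv : ‖v‖ = 1 := by rw [norm_toEuclideanLin_submatrix_one (Fin.castLE_injective h), hw]
  obtain ⟨μ, hμ, hre⟩ := U.exists_mem_spectrum_re_mul_norm_sq_le v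
  have hμ₁ : ‖μ‖ = 1 := norm_eq_one_of_mem_spectrum hU hμ
  refine ⟨μ, hμ, ?_⟩
  rw [Complex.abs_arg_eq_arccos_re_div_norm (norm_ne_zero_iff.mp (hμ₁.trans_ne one_ne_zero)),
    hμ₁, div_one]
  refine Real.arccos_le_arccos ?_
  calc μ.re ≤ (⟪v, toEuclideanLin U v⟫_ℂ).re := by simpa [hv] using hre
    _ = (⟪w, toEuclideanLin F₁ w⟫_ℂ).re := by
      rw [inner_toEuclideanLin_submatrix_one, hF₁]
      rfl
    _ ≤ ‖w‖ * ‖toEuclideanLin F₁ w‖ := re_inner_le_norm (𝕜 := ℂ) _ _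
    _ = F₁.minSingularValue := by rw [hw, hFw, one_mul]
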